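/- For natural numbers m ≥ 1 and 0 ≤ μ ≤ ⌊m/2⌋, the identity C(-m, μ)·C(-m-μ-1, ⌊m/2⌋-μ) = (-1)^{⌊m/2⌋} C(⌊m/2⌋, μ)·C(m+⌊m/2⌋, m)·m/(m+μ) holds, where C denotes the generalized binomial coefficient. -/

import Mathlib

/-! Upper negation turns `C(-m, μ) C(-m-μ-1, k-μ)` (with `k = ⌊m/2⌋`) into
`(-1)^k C(m+μ-1, μ) C(m+k, k-μ)`. The two integer identities
`C(m+k, k-μ) C(m+μ, μ) = C(m+k, m) C(k, μ)` (both sides count the ways to choose nested subsets)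
and `C(m+μ-1, μ) (m+μ) = C(m+μ, μ) m` then give the right-hand side. -/

/-- Generalized binomial coefficient `C(x, j)` for an integer upper index. -/
def genBinom (x : ℤ) (j : ℕ) : ℚ :=
  (∏ i ∈ Finset.range j, ((x : ℚ) - i)) / (Nat.factorial j)

open Finset

theorem genBinom_neg_natCast (n j : ℕ) :
    genBinom (-(n : ℤ)) j = (-1) ^ j * ((n + j - 1).choose j : ℚ) := by
  have hprod : ∏ i ∈ range j, (((-(n : ℤ) : ℤ) : ℚ) - i) = (-1) ^ j * (n.ascFactorial j : ℚ) := by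
    rw [Nat.ascFactorial_eq_prod_range, Nat.cast_prod, ← card_range j, ← prod_const,
      card_range, ← prod_mul_distrib]
    exact prod_congr rfl fun i _ => by push_cast; ring
  rw [genBinom, hprod, Nat.ascFactorial_eq_factorial_mul_choose']
  push_cast
  field_simp

theorem Nat.choose_add_mul_choose_add {m k μ : ℕ} (h : μ ≤ k) :
    (m + k).choose (k - μ) * (m + μ).choose μ = (m + k).choose m * k.choose μ := by
  have := Nat.choose_mul (n := m + k) (k := m + μ) (s := m) (by omega)
  rwa [Nat.choose_symm_add, Nat.add_sub_cancel_left, Nat.add_sub_cancel_left,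
    ← Nat.choose_symm (by omega), show m + k - (m + μ) = k - μ by omega] at this

theorem Nat.choose_pred_add_mul {m : ℕ} (hm : 1 ≤ m) (μ : ℕ) :
    (m + μ - 1).choose μ * (m + μ) = (m + μ).choose μ * m := by
  obtain ⟨m, rfl⟩ := Nat.exists_eq_add_of_le' hm
  have := Nat.choose_mul_succ_eq (m + μ) μ
  rwa [show m + 1 + μ - 1 = m + μ by omega, show m + 1 + μ = m + μ + 1 by omega,
    ← show m + μ + 1 - μ = m + 1 by omega]

theorem stmt_18 (m μ : ℕ) (hm : 1 ≤ m) (h : μ ≤ m / 2) :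
    genBinom (-(m:ℤ)) μ * genBinom (-(m:ℤ) - μ - 1) (m / 2 - μ) =
      (-1 : ℚ) ^ (m / 2) * (Nat.choose (m / 2) μ : ℚ) *
        (Nat.choose (m + m / 2) m : ℚ) * m / (m + μ) := by
  have hupper : -(m : ℤ) - μ - 1 = -((m + μ + 1 : ℕ) : ℤ) := by push_cast; ring
  rw [hupper, genBinom_neg_natCast, genBinom_neg_natCast,
    show m + μ + 1 + (m / 2 - μ) - 1 = m + m / 2 by omega]
  have hsign : (-1 : ℚ) ^ μ * (-1) ^ (m / 2 - μ) = (-1) ^ (m / 2) := by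
    rw [← pow_add, Nat.add_sub_cancel' h]
  have hnested : ((m + m / 2).choose (m / 2 - μ) : ℚ) * (m + μ).choose μ
      = (m + m / 2).choose m * (m / 2).choose μ := by
    exact_mod_cast Nat.choose_add_mul_choose_add h
  have hpred : ((m + μ - 1).choose μ : ℚ) * (m + μ) = (m + μ).choose μ * m := by
    exact_mod_cast Nat.choose_pred_add_mul hm μ
  have hpos : (m : ℚ) + μ ≠ 0 := by positivity
  rw [eq_div_iff hpos, ← hsign]
  linear_combination (-1 : ℚ) ^ μ * (-1) ^ (m / 2 - μ) *
    (((m + m / 2).choose (m / 2 - μ) : ℚ) * hpred + m * hnested)
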